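/- Let Ā be Hermitian positive semidefinite and φ a unimodular vector. If ψ is the unimodular vector with ψ_k = e^{i arg((Āφ)_k)} (with ψ_k = 1 when (Āφ)_k = 0), then Re(ψ^H Ā φ) ≥ Re(φ^H Ā φ) = φ^H Ā φ. -/

import Mathlib

open Matrix
open scoped ComplexOrder

lemma conj_exp_arg_mul (z : ℂ) :
    (starRingEnd ℂ) (Complex.exp (z.arg * Complex.I)) * z = (‖z‖ : ℂ) := by
  have h := Complex.norm_mul_exp_arg_mul_I z
  have hc : (starRingEnd ℂ) (Complex.exp (↑z.arg * Complex.I))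
      = (Complex.exp (↑z.arg * Complex.I))⁻¹ := by
    rw [← Complex.exp_conj, ← Complex.exp_neg]
    congr 1
    simp only [_root_.map_mul, Complex.conj_I, Complex.conj_ofReal]
    ring
  rw [hc, inv_mul_eq_iff_eq_mul₀ (Complex.exp_ne_zero _)]
  linear_combination -h

/-- Ascent step: for Hermitian PSD `Ā` and unimodular `φ`, taking
`ψ_k = e^{i arg((Āφ)_k)}` gives `Re(ψᴴ Ā φ) ≥ Re(φᴴ Ā φ) = φᴴ Ā φ` (which is real). -/
theorem power_method_ascent (n : ℕ) (Ab : Matrix (Fin n) (Fin n) ℂ)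
    (hAb : Ab.PosSemidef) (φ : Fin n → ℂ) (hφ : ∀ k, ‖φ k‖ = 1) :
    let ψ : Fin n → ℂ := fun k => Complex.exp (((Ab.mulVec φ) k).arg * Complex.I)
    (star φ ⬝ᵥ Ab.mulVec φ).re ≤ (star ψ ⬝ᵥ Ab.mulVec φ).re ∧
    (star φ ⬝ᵥ Ab.mulVec φ) = (((star φ ⬝ᵥ Ab.mulVec φ).re : ℝ) : ℂ) := by
  intro ψ
  set v := Ab.mulVec φ with hv
  constructor
  · simp only [dotProduct, Pi.star_apply, RCLike.star_def, Complex.re_sum]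
    apply Finset.sum_le_sum
    intro k _
    have key : ((starRingEnd ℂ) (ψ k) * v k) = (‖v k‖ : ℂ) := conj_exp_arg_mul (v k)
    rw [key]
    calc ((starRingEnd ℂ) (φ k) * v k).re ≤ ‖(starRingEnd ℂ) (φ k) * v k‖ :=
          Complex.re_le_norm _
      _ = ‖v k‖ := by rw [norm_mul, Complex.norm_conj, hφ, one_mul]
      _ = ((‖v k‖ : ℂ)).re := by simp
  · have h := hAb.dotProduct_mulVec_nonneg φ
    rw [Complex.le_def] at h
    exact Complex.ext (by simp) (by simpa using h.2.symm)
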